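/- arXiv:1205.0739 — 7 statements merged into one kernel-verified Lean document; each statement's English description precedes it below -/
import Mathlib

section
/- Let N be an even positive integer and let (a,b,m,n) be integers with m ≥ 2, n ≥ 1, 1 ≤ a ≤ m, 0 ≤ b ≤ n, a + b ≤ N/2, (m−a) + (n−b) ≤ N/2 and m + n < N − 1 (so that both (a,b,m,n) and (a−1, b+1, m−1, n+1) parametrize 3×2 tables with positive margins and N/2 cases and N/2 controls). Let f(a,b,m,n) = (2a−m)²/m + (2b−n)²/n + (2a−m+2b−n)²/(N−m−n) denote the χ²-statistic of the corresponding table. Then |f(a,b,m,n) − f(a−1, b+1, m−1, n+1)| ≤ 4N/(N+2). -/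
/-!
Write `p = m - a` and `q = n - b` for the controls in the first two rows. The move leaves the
third row unchanged, and a row with `r + 1` individuals, `t` of them controls, changes by
`(r + 1 - 2t)² / (r + 1) - (r - 2t)² / r = 1 - 4t² / (r (r + 1))`
when it loses one of its cases.
Hence the change equals `4 q² / (n (n + 1)) - 4 p² / ((m - 1) m)`. Since `p ≤ m - 1`, `q ≤ n` and
`2p, 2q ≤ N`, both terms lie in `[0, 4t / (t + 1)] ⊆ [0, 4N / (N + 2)]`.
-/

lemma sq_sub_two_mul_div_add_one_sub (r t : ℝ) (hr : r ≠ 0) (hr1 : r + 1 ≠ 0) :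
    (r + 1 - 2 * t) ^ 2 / (r + 1) - (r - 2 * t) ^ 2 / r = 1 - 4 * t ^ 2 / (r * (r + 1)) := by
  field_simp
  ring

lemma sq_div_mul_add_one_le {t r : ℝ} (ht : 0 ≤ t) (htr : t ≤ r) :
    t ^ 2 / (r * (r + 1)) ≤ t / (t + 1) := by
  rcases ht.eq_or_lt with rfl | ht
  · simp
  rw [div_le_div_iff₀ (by nlinarith) (by linarith)]
  nlinarith [mul_le_mul htr htr ht.le (by linarith)]

lemma four_mul_sq_div_mul_add_one_mem_Icc {t r N : ℝ} (ht : 0 ≤ t) (htr : t ≤ r)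
    (htN : 2 * t ≤ N) : 4 * t ^ 2 / (r * (r + 1)) ∈ Set.Icc 0 (4 * N / (N + 2)) := by
  refine ⟨div_nonneg (by positivity) (by nlinarith), ?_⟩
  calc 4 * t ^ 2 / (r * (r + 1)) = 4 * (t ^ 2 / (r * (r + 1))) := mul_div_assoc _ _ _
    _ ≤ 4 * (t / (t + 1)) :=
      mul_le_mul_of_nonneg_left (sq_div_mul_add_one_le ht htr) zero_le_four
    _ ≤ 4 * N / (N + 2) := by
      rw [← mul_div_assoc, div_le_div_iff₀ (by linarith) (by linarith)]
      nlinarith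

theorem chiSq_sensitivity_bound_general (N a b m n : ℤ)
    (hm : 2 ≤ m) (hn : 1 ≤ n) (ha1 : 1 ≤ a) (ham : a ≤ m) (hb0 : 0 ≤ b)
    (hbn : b ≤ n) (hcompl : (m - a) + (n - b) ≤ N / 2) :
    |((2 * (a : ℝ) - m) ^ 2 / m + (2 * (b : ℝ) - n) ^ 2 / n
        + (2 * (a : ℝ) - m + 2 * b - n) ^ 2 / ((N : ℝ) - m - n))
      - ((2 * ((a : ℝ) - 1) - ((m : ℝ) - 1)) ^ 2 / ((m : ℝ) - 1)
        + (2 * ((b : ℝ) + 1) - ((n : ℝ) + 1)) ^ 2 / ((n : ℝ) + 1)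
        + (2 * ((a : ℝ) - 1) - ((m : ℝ) - 1) + 2 * ((b : ℝ) + 1)
            - ((n : ℝ) + 1)) ^ 2 / ((N : ℝ) - (m - 1) - (n + 1)))|
      ≤ 4 * (N : ℝ) / ((N : ℝ) + 2) := by
  have hmR : (2 : ℝ) ≤ m := by exact_mod_cast hm
  have hnR : (1 : ℝ) ≤ n := by exact_mod_cast hn
  have row₁ := sq_sub_two_mul_div_add_one_sub (m - 1) (m - a) (by linarith) (by linarith)
  have row₂ := sq_sub_two_mul_div_add_one_sub n (n - b) (by linarith) (by linarith)
  have hp := four_mul_sq_div_mul_add_one_mem_Icc (r := (m : ℝ) - 1) (N := N)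
    (t := m - a) (by exact_mod_cast (by omega : 0 ≤ m - a))
    (by exact_mod_cast (by omega : m - a ≤ m - 1))
    (by exact_mod_cast (by omega : 2 * (m - a) ≤ N))
  have hq := four_mul_sq_div_mul_add_one_mem_Icc (r := (n : ℝ)) (N := N)
    (t := n - b) (by exact_mod_cast (by omega : 0 ≤ n - b))
    (by exact_mod_cast (by omega : n - b ≤ n))
    (by exact_mod_cast (by omega : 2 * (n - b) ≤ N))
  calc _ = |4 * ((n : ℝ) - b) ^ 2 / (n * (n + 1))
          - 4 * ((m : ℝ) - a) ^ 2 / ((m - 1) * (m - 1 + 1))| := by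
        rw [show (N : ℝ) - (m - 1) - (n + 1) = N - m - n by ring]
        congr 1
        linear_combination row₁ - row₂
    _ ≤ 4 * (N : ℝ) / ((N : ℝ) + 2) := abs_sub_le_of_nonneg_of_le hq.1 hq.2 hp.1 hp.2

/-- For integer parameters `(a,b,m,n)` of a 3×2 table with
positive margins, `N/2` cases and `N/2` controls (with `N` even and positive),
the change of the χ²-statistic
`f(a,b,m,n) = (2a−m)²/m + (2b−n)²/n + (2a−m+2b−n)²/(N−m−n)`
under the one-individual move `(a,b,m,n) ↦ (a−1, b+1, m−1, n+1)` is bounded by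
`4N/(N+2)`. -/
theorem chiSq_sensitivity_bound (N a b m n : ℤ) (hN : 0 < N) (hNeven : Even N)
    (hm : 2 ≤ m) (hn : 1 ≤ n) (ha1 : 1 ≤ a) (ham : a ≤ m) (hb0 : 0 ≤ b)
    (hbn : b ≤ n) (hab : a + b ≤ N / 2) (hcompl : (m - a) + (n - b) ≤ N / 2)
    (hmn : m + n < N - 1) :
    |((2 * (a : ℝ) - m) ^ 2 / m + (2 * (b : ℝ) - n) ^ 2 / n
        + (2 * (a : ℝ) - m + 2 * b - n) ^ 2 / ((N : ℝ) - m - n))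
      - ((2 * ((a : ℝ) - 1) - ((m : ℝ) - 1)) ^ 2 / ((m : ℝ) - 1)
        + (2 * ((b : ℝ) + 1) - ((n : ℝ) + 1)) ^ 2 / ((n : ℝ) + 1)
        + (2 * ((a : ℝ) - 1) - ((m : ℝ) - 1) + 2 * ((b : ℝ) + 1)
            - ((n : ℝ) + 1)) ^ 2 / ((N : ℝ) - (m - 1) - (n + 1)))|
      ≤ 4 * (N : ℝ) / ((N : ℝ) + 2) :=
  chiSq_sensitivity_bound_general N a b m n hm hn ha1 ham hb0 hbn hcompl
end

section
/- Let N be an even integer with N ≥ 6. Let T₁ be the 3×2 table with rows (1, N/2), (N/2−2, 0), (1, 0) and let T₂ be the 3×2 table with rows (0, N/2), (N/2−1, 0), (1, 0); both tables have positive row and column sums and both column sums equal N/2. Then χ²(T₂) − χ²(T₁) = 4N/(N+2). In particular the bound 4N/(N+2) for the change of the χ²-statistic under a one-individual change is attained. -/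
/-!
Expanding `(O - E)² / E = O² / E - 2 O + E` and summing gives the identity
`χ² = N (∑ O² / (r c) - 1)` whenever all margins are nonzero. With `m = N / 2`, the sum
`∑ O² / (r c)` is `2` for `T₂` and `2m / (m + 1)` for `T₁`, so `χ²(T₂) = 2m`,
`χ²(T₁) = 2m (m - 1) / (m + 1)`, and the difference is `4m / (m + 1) = 4N / (N + 2)`.
-/

open Finset

/-- The Pearson χ²-statistic of a 3×2 contingency table
`O : Fin 3 → Fin 2 → ℝ`. -/
noncomputable def chiSq (O : Fin 3 → Fin 2 → ℝ) : ℝ :=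
  ∑ i : Fin 3, ∑ j : Fin 2,
    (O i j - (∑ k : Fin 2, O i k) * (∑ k : Fin 3, O k j) /
        (∑ i' : Fin 3, ∑ j' : Fin 2, O i' j')) ^ 2 /
      ((∑ k : Fin 2, O i k) * (∑ k : Fin 3, O k j) /
        (∑ i' : Fin 3, ∑ j' : Fin 2, O i' j'))

theorem sum_sq_sub_div_eq_sum_sq_div_sub {ι : Type*} [Fintype ι] (O E : ι → ℝ)
    (hE : ∀ i, E i ≠ 0) (hsum : ∑ i, E i = ∑ i, O i) :
    ∑ i, (O i - E i) ^ 2 / E i = ∑ i, O i ^ 2 / E i - ∑ i, O i := by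
  have expand : ∀ i, (O i - E i) ^ 2 / E i = O i ^ 2 / E i - 2 * O i + E i := by
    intro i
    field_simp [hE i]
    ring
  simp only [expand, sum_add_distrib, sum_sub_distrib, ← mul_sum, hsum]
  ring

theorem chiSq_eq_mul_sum_sq_div_sub (O : Fin 3 → Fin 2 → ℝ)
    (hr : ∀ i, ∑ j, O i j ≠ 0) (hc : ∀ j, ∑ i, O i j ≠ 0) (hN : ∑ i, ∑ j, O i j ≠ 0) :
    chiSq O = (∑ i, ∑ j, O i j) *
        ∑ i, ∑ j, O i j ^ 2 / ((∑ k, O i k) * (∑ k, O k j)) - ∑ i, ∑ j, O i j := by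
  rw [chiSq]
  set N := ∑ i, ∑ j, O i j
  have hcol : ∑ j, ∑ i, O i j = N := sum_comm
  have key := sum_sq_sub_div_eq_sum_sq_div_sub (fun p : Fin 3 × Fin 2 => O p.1 p.2)
    (fun p => (∑ k, O p.1 k) * (∑ k, O k p.2) / N)
    (fun p => div_ne_zero (mul_ne_zero (hr p.1) (hc p.2)) hN)
    (by simp only [Fintype.sum_prod_type, ← sum_div, ← mul_sum, ← sum_mul, hcol]
        exact mul_div_cancel_right₀ N hN)
  simp only [Fintype.sum_prod_type] at key
  rw [key, mul_sum]
  congr 1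
  refine sum_congr rfl fun i _ => ?_
  rw [mul_sum]
  refine sum_congr rfl fun j _ => ?_
  rw [div_div_eq_mul_div]
  ring

theorem chiSq_T₂ (m : ℝ) (hm : 1 < m) :
    chiSq ![![0, m], ![m - 1, 0], ![1, 0]] = 2 * m := by
  rw [chiSq_eq_mul_sum_sq_div_sub]
  all_goals simp only [Fin.sum_univ_succ, Fin.sum_univ_zero, Fin.forall_fin_succ,
    IsEmpty.forall_iff, Matrix.cons_val_zero, Matrix.cons_val_succ, add_zero]
  · have : m - 1 ≠ 0 := (sub_pos.2 hm).ne'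
    have : m ≠ 0 := (zero_lt_one.trans hm).ne'
    rw [sub_add_cancel]
    field_simp
    ring
  all_goals (repeat' constructor) <;> intro h <;> linarith

theorem chiSq_T₁ (m : ℝ) (hm : 2 < m) :
    chiSq ![![1, m], ![m - 2, 0], ![1, 0]] = 2 * m * (m - 1) / (m + 1) := by
  rw [chiSq_eq_mul_sum_sq_div_sub]
  all_goals simp only [Fin.sum_univ_succ, Fin.sum_univ_zero, Fin.forall_fin_succ,
    IsEmpty.forall_iff, Matrix.cons_val_zero, Matrix.cons_val_succ, add_zero]
  · have : m - 2 ≠ 0 := (sub_pos.2 hm).ne'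
    have : m ≠ 0 := (zero_lt_two.trans hm).ne'
    have : m + 1 ≠ 0 := by linarith
    rw [show 1 + (m - 2 + 1) = m by ring]
    field_simp
    ring
  all_goals (repeat' constructor) <;> intro h <;> linarith

theorem chiSq_sensitivity_attained_general (N : ℕ) (hN : 6 ≤ N) :
    chiSq ![![0, (N : ℝ) / 2], ![(N : ℝ) / 2 - 1, 0], ![1, 0]]
      - chiSq ![![1, (N : ℝ) / 2], ![(N : ℝ) / 2 - 2, 0], ![1, 0]]
      = 4 * (N : ℝ) / ((N : ℝ) + 2) := by
  have hm : (3 : ℝ) ≤ (N : ℝ) / 2 := by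
    rw [le_div_iff₀ two_pos]
    exact_mod_cast hN
  rw [chiSq_T₂ _ (by linarith), chiSq_T₁ _ (by linarith)]
  have : (N : ℝ) + 2 ≠ 0 := by positivity
  field_simp
  ring

/-- For `N` even, `N ≥ 6`, the tables `T₁` with rows
`(1, N/2), (N/2−2, 0), (1, 0)` and `T₂` with rows `(0, N/2), (N/2−1, 0), (1, 0)`
satisfy `χ²(T₂) − χ²(T₁) = 4N/(N+2)`; i.e. the sensitivity bound `4N/(N+2)` is
attained by a one-individual change. -/
theorem chiSq_sensitivity_attained (N : ℕ) (hNeven : Even N) (hN : 6 ≤ N) :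
    chiSq ![![0, (N : ℝ) / 2], ![(N : ℝ) / 2 - 1, 0], ![1, 0]]
      - chiSq ![![1, (N : ℝ) / 2], ![(N : ℝ) / 2 - 2, 0], ![1, 0]]
      = 4 * (N : ℝ) / ((N : ℝ) + 2) :=
  chiSq_sensitivity_attained_general N hN
end

section
/- For any 3×2 contingency table with nonnegative real entries, positive row sums, positive column sums, and total count N, the Pearson χ²-statistic satisfies 0 ≤ χ² ≤ N. (The maximal χ²-statistic over all such tables with N individuals is N, while the minimal one is 0.) -/
/-! Each term `(x - e)² / e = x² / e - 2x + e` of the statistic, with `e = r s / N`, is at most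
`N x / s - 2x + e` because `x ≤ r`. Summing, the `N x / s` terms give `N` per column, the `x` terms
give `N` and the expected counts give `N`, so `χ² ≤ (#columns - 1) N`, which is `N` for two
columns. -/

open Finset

lemma sq_sub_div_le {x r s N : ℝ} (hx : 0 ≤ x) (hxr : x ≤ r) (hr : 0 < r) (hs : 0 < s)
    (hN : 0 < N) :
    (x - r * s / N) ^ 2 / (r * s / N) ≤ N * x / s - 2 * x + r * s / N := by
  have expand : (x - r * s / N) ^ 2 / (r * s / N) = N * x ^ 2 / (r * s) - 2 * x + r * s / N := by
    field_simp
    ring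
  have hsq : N * x ^ 2 / (r * s) ≤ N * x / s := by
    rw [div_le_div_iff₀ (by positivity) hs]
    nlinarith [mul_nonneg (mul_nonneg hN.le hx) hs.le]
  linarith

namespace ContingencyTable

variable {ι κ : Type*} [Fintype ι] [Fintype κ] (O : ι → κ → ℝ)

noncomputable def rowSum (i : ι) : ℝ := ∑ j, O i j

noncomputable def colSum (j : κ) : ℝ := ∑ i, O i j

noncomputable def total : ℝ := ∑ i, ∑ j, O i j

noncomputable def expected (i : ι) (j : κ) : ℝ := rowSum O i * colSum O j / total O

noncomputable def pearsonChiSq : ℝ :=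
  ∑ i, ∑ j, (O i j - expected O i j) ^ 2 / expected O i j

lemma sum_rowSum : ∑ i, rowSum O i = total O := rfl

lemma sum_colSum : ∑ j, colSum O j = total O := by
  simp only [colSum, total]
  exact sum_comm

lemma sum_sum_expected (htot : total O ≠ 0) : ∑ i, ∑ j, expected O i j = total O := by
  simp only [expected, ← sum_div, ← mul_sum, ← sum_mul, sum_colSum, sum_rowSum]
  exact mul_div_cancel_right₀ _ htot

lemma sum_sum_mul_div_colSum (c : ℝ) (hcol : ∀ j, colSum O j ≠ 0) :
    ∑ i, ∑ j, c * O i j / colSum O j = Fintype.card κ * c := by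
  rw [sum_comm]
  simp only [← sum_div, ← mul_sum]
  simp [← colSum.eq_1, mul_div_cancel_right₀ _ (hcol _)]

variable {O}

lemma expected_nonneg (hO : ∀ i j, 0 ≤ O i j) (i : ι) (j : κ) : 0 ≤ expected O i j :=
  div_nonneg (mul_nonneg (sum_nonneg fun k _ => hO i k) (sum_nonneg fun k _ => hO k j))
    (sum_nonneg fun k _ => sum_nonneg fun l _ => hO k l)

theorem pearsonChiSq_nonneg (hO : ∀ i j, 0 ≤ O i j) : 0 ≤ pearsonChiSq O :=
  sum_nonneg fun i _ => sum_nonneg fun j _ =>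
    div_nonneg (sq_nonneg _) (expected_nonneg hO i j)

theorem pearsonChiSq_le (hO : ∀ i j, 0 ≤ O i j) (hrow : ∀ i, 0 < rowSum O i)
    (hcol : ∀ j, 0 < colSum O j) :
    pearsonChiSq O ≤ (Fintype.card κ - 1) * total O := by
  rcases isEmpty_or_nonempty κ with hκ | hκ
  · simp [pearsonChiSq, total]
  have htot : 0 < total O := sum_colSum O ▸ sum_pos (fun j _ => hcol j) univ_nonempty
  calc pearsonChiSq O
      ≤ ∑ i, ∑ j, (total O * O i j / colSum O j - 2 * O i j + expected O i j) :=
        sum_le_sum fun i _ => sum_le_sum fun j _ => sq_sub_div_le (hO i j)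
          (single_le_sum (fun k _ => hO i k) (mem_univ j)) (hrow i) (hcol j) htot
    _ = Fintype.card κ * total O - 2 * total O + total O := by
        simp only [sum_add_distrib, sum_sub_distrib, ← mul_sum,
          sum_sum_mul_div_colSum O _ fun j => (hcol j).ne', sum_sum_expected O htot.ne']
        rfl
    _ = (Fintype.card κ - 1) * total O := by ring

end ContingencyTable

/-- For any 3×2 table with nonnegative entries, positive row and
column sums, and total count `N`, the Pearson χ²-statistic satisfies
`0 ≤ χ² ≤ N`. -/
theorem chiSq_range (O : Fin 3 → Fin 2 → ℝ) (N : ℝ)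
    (hnonneg : ∀ i j, 0 ≤ O i j)
    (hrow : ∀ i : Fin 3, 0 < ∑ j : Fin 2, O i j)
    (hcol : ∀ j : Fin 2, 0 < ∑ i : Fin 3, O i j)
    (hN : N = ∑ i : Fin 3, ∑ j : Fin 2, O i j) :
    0 ≤ chiSq O ∧ chiSq O ≤ N := by
  have hχ : chiSq O = ContingencyTable.pearsonChiSq O := rfl
  have hle := ContingencyTable.pearsonChiSq_le hnonneg hrow hcol
  rw [Fintype.card_fin] at hle
  refine ⟨hχ ▸ ContingencyTable.pearsonChiSq_nonneg hnonneg, ?_⟩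
  rw [hχ, hN]
  exact hle.trans_eq (by unfold ContingencyTable.total; norm_num)
end

section
/- Let ε > 0 with ε ≠ 2. Let f_T(t) = (1/2)·exp(−t/2) for t ≥ 0 and f_T(t) = 0 for t < 0 (the density of the χ²-distribution with 2 degrees of freedom), and let f_Y(y) = (ε/8)·exp(−ε|y|/4) for y ∈ ℝ (the density of the Laplace distribution with mean 0 and scale 4/ε). Then for every x ∈ ℝ the convolution ∫_ℝ f_T(t)·f_Y(x−t) dt equals: (ε/4)·(1/(ε+2))·exp(εx/4) if x < 0, and (ε/4)·[ (1/(ε−2) + 1/(ε+2))·exp(−x/2) − (1/(ε−2))·exp(−εx/4) ] if x ≥ 0. Hence this piecewise function is the probability density of T + Y when T ~ χ²₂ and Y ~ Laplace(0, 4/ε) are independent. -/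
open MeasureTheory Real Set

/-! For `t ≥ x` the integrand `exp (-a t) exp (-b |x - t|)` is `exp (b x) exp (-(a + b) t)`, and for
`t ≤ x` it is `exp (-b x) exp ((b - a) t)`; splitting the half-line `t > 0` at `x` (when `x ≥ 0`)
leaves two elementary exponential integrals. The theorem is the case `a = 1/2`, `b = ε/4`. -/

lemma integral_exp_mul {c : ℝ} (hc : c ≠ 0) (x y : ℝ) :
    ∫ t in x..y, exp (c * t) = (exp (c * y) - exp (c * x)) / c := by
  rw [intervalIntegral.integral_comp_mul_left (fun u => exp u) hc, integral_exp, smul_eq_mul,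
    inv_mul_eq_div]

lemma integral_ite_nonneg_mul (f g : ℝ → ℝ) :
    ∫ t, (if 0 ≤ t then f t else 0) * g t = ∫ t in Ioi 0, f t * g t := by
  rw [← integral_Ici_eq_integral_Ioi, ← integral_indicator measurableSet_Ici]
  congr 1 with t
  by_cases ht : 0 ≤ t <;> simp [indicator, ht]

section ExpLaplace

variable {a b x t : ℝ}

lemma exp_mul_exp_abs_sub_of_le (h : x ≤ t) :
    exp (-a * t) * exp (-b * |x - t|) = exp (b * x) * exp (-(a + b) * t) := by
  rw [abs_of_nonpos (by linarith), ← exp_add, ← exp_add]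
  ring_nf

lemma exp_mul_exp_abs_sub_of_ge (h : t ≤ x) :
    exp (-a * t) * exp (-b * |x - t|) = exp (-b * x) * exp ((b - a) * t) := by
  rw [abs_of_nonneg (by linarith), ← exp_add, ← exp_add]
  ring_nf

lemma integrableOn_exp_mul_exp_abs_sub_Ioi (hab : 0 < a + b) {y : ℝ} (hxy : x ≤ y) :
    IntegrableOn (fun t => exp (-a * t) * exp (-b * |x - t|)) (Ioi y) :=
  IntegrableOn.congr_fun
    ((integrableOn_exp_mul_Ioi (a := -(a + b)) (by linarith) y).const_mul (exp (b * x)))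
    (fun t ht => (exp_mul_exp_abs_sub_of_le (hxy.trans (le_of_lt ht))).symm) measurableSet_Ioi

lemma integral_exp_mul_exp_abs_sub_Ioi (hab : 0 < a + b) {y : ℝ} (hxy : x ≤ y) :
    ∫ t in Ioi y, exp (-a * t) * exp (-b * |x - t|) =
      exp (b * x) * exp (-(a + b) * y) / (a + b) := by
  rw [setIntegral_congr_fun measurableSet_Ioi
    (fun t ht => exp_mul_exp_abs_sub_of_le (hxy.trans (le_of_lt ht))), integral_const_mul,
    integral_exp_mul_Ioi (by linarith), neg_div_neg_eq, mul_div_assoc]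

lemma integral_exp_mul_exp_abs_sub_Ioc (hab : a ≠ b) (hx : 0 ≤ x) :
    ∫ t in Ioc 0 x, exp (-a * t) * exp (-b * |x - t|) =
      exp (-b * x) * (exp ((b - a) * x) - 1) / (b - a) := by
  rw [← intervalIntegral.integral_of_le hx, intervalIntegral.integral_congr
    (g := fun t => exp (-b * x) * exp ((b - a) * t)), intervalIntegral.integral_const_mul,
    integral_exp_mul (sub_ne_zero.mpr hab.symm), mul_zero, exp_zero, mul_div_assoc]
  intro t ht
  rw [uIcc_of_le hx] at ht
  exact exp_mul_exp_abs_sub_of_ge ht.2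

theorem integral_exp_mul_exp_abs_sub (hab : 0 < a + b) (hne : a ≠ b) (x : ℝ) :
    ∫ t in Ioi 0, exp (-a * t) * exp (-b * |x - t|) =
      if x < 0 then exp (b * x) / (a + b)
      else (exp (-a * x) - exp (-b * x)) / (b - a) + exp (-a * x) / (a + b) := by
  split_ifs with hx
  · rw [integral_exp_mul_exp_abs_sub_Ioi hab hx.le, mul_zero, exp_zero, mul_one]
  push Not at hx
  have hcont : Continuous fun t => exp (-a * t) * exp (-b * |x - t|) := by fun_prop
  rw [← Ioc_union_Ioi_eq_Ioi hx, setIntegral_union (Ioc_disjoint_Ioi le_rfl) measurableSet_Ioi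
    hcont.integrableOn_Ioc (integrableOn_exp_mul_exp_abs_sub_Ioi hab le_rfl),
    integral_exp_mul_exp_abs_sub_Ioc hne hx, integral_exp_mul_exp_abs_sub_Ioi hab le_rfl]
  have hbody : exp (-b * x) * exp ((b - a) * x) = exp (-a * x) := by rw [← exp_add]; ring_nf
  have htail : exp (b * x) * exp (-(a + b) * x) = exp (-a * x) := by rw [← exp_add]; ring_nf
  rw [mul_sub, hbody, htail, mul_one]

end ExpLaplace

/-- The convolution of the χ²₂ density
`f_T(t) = (1/2)exp(−t/2)` (for `t ≥ 0`, else `0`) with the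
`Laplace(0, 4/ε)` density `f_Y(y) = (ε/8)exp(−ε|y|/4)` equals the stated
piecewise density of the perturbed χ² test statistic `T + Y`. -/
theorem perturbed_chiSq_density (ε : ℝ) (hε : 0 < ε) (hε2 : ε ≠ 2) (x : ℝ) :
    (∫ t : ℝ, (if 0 ≤ t then (1 / 2) * exp (-t / 2) else 0)
        * ((ε / 8) * exp (-ε * |x - t| / 4)))
      = if x < 0 then (ε / 4) * (1 / (ε + 2)) * exp (ε * x / 4)
        else (ε / 4) * ((1 / (ε - 2) + 1 / (ε + 2)) * exp (-x / 2)
          - (1 / (ε - 2)) * exp (-ε * x / 4)) := by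
  have hrates : (1 / 2 : ℝ) ≠ ε / 4 := by contrapose! hε2; linarith
  have hconv := integral_exp_mul_exp_abs_sub (a := 1 / 2) (b := ε / 4) (by positivity) hrates x
  have hintegrand : ∀ t : ℝ, (1 / 2) * exp (-t / 2) * ((ε / 8) * exp (-ε * |x - t| / 4)) =
      ε / 16 * (exp (-(1 / 2) * t) * exp (-(ε / 4) * |x - t|)) := fun t => by ring_nf
  rw [integral_ite_nonneg_mul, funext hintegrand, integral_const_mul, hconv]
  rw [show ε / 4 * x = ε * x / 4 by ring, show -(1 / 2) * x = -x / 2 by ring,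
    show -(ε / 4) * x = -ε * x / 4 by ring, show ε / 4 - 1 / 2 = (ε - 2) / 4 by ring,
    show 1 / 2 + ε / 4 = (ε + 2) / 4 by ring]
  have he2 : ε - 2 ≠ 0 := sub_ne_zero.mpr hε2
  split_ifs <;> field_simp <;> ring
end

section
/- Let N be an even positive integer and let a, b be integers with a ≥ 1, b ≥ 1 and a + b < N/2. Let D be the exactly independent 3×2 table with rows (a, a), (b, b), (N/2−a−b, N/2−a−b) and let D' be its neighbor with rows (a−1, a), (b+1, b), (N/2−a−b, N/2−a−b). Then the difference of the corresponding p-values satisfies | exp(−χ²(D)/2) − exp(−χ²(D')/2) | = 1 − exp( −(1/2)·(1/(2a−1) + 1/(2b+1)) ) ≤ 1 − exp(−2/3) ≤ exp(−2/3). -/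
/-!
Both tables have equal column totals, so every expected count is half its row sum and
χ² collapses to `∑ᵢ (Oᵢ₀ - Oᵢ₁)² / (Oᵢ₀ + Oᵢ₁)`. This vanishes for `D`, while for `D'` only the
first two rows contribute, with difference `∓1` and row sums `2a - 1` and `2b + 1`.
The bounds then follow from `a, b ≥ 1` and `2/3 < log 2`.
-/

open Finset Real

theorem chiSq_eq_sum_of_colSum_eq (O : Fin 3 → Fin 2 → ℝ)
    (hcol : ∑ i, O i 0 = ∑ i, O i 1) (hS : ∑ i, O i 0 ≠ 0) :
    chiSq O = ∑ i, (O i 0 - O i 1) ^ 2 / (O i 0 + O i 1) := by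
  have htot : ∑ i, ∑ j, O i j = 2 * ∑ i, O i 0 := by
    rw [Finset.sum_comm, Fin.sum_univ_two, ← hcol]; ring
  have hexpected : ∀ i j, (∑ k, O i k) * (∑ k, O k j) / ∑ i', ∑ j', O i' j'
      = (O i 0 + O i 1) / 2 := by
    intro i j
    rw [htot, Fin.sum_univ_two]
    fin_cases j
    · simp only [Fin.zero_eta]; field_simp
    · simp only [Fin.mk_one, ← hcol]; field_simp
  unfold chiSq
  simp only [hexpected]
  refine Finset.sum_congr rfl fun i _ => ?_
  rw [Fin.sum_univ_two, div_div_eq_mul_div, div_div_eq_mul_div, ← add_div]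
  congr 1
  ring

theorem half_le_exp_neg_two_div_three : 1 / 2 ≤ exp (-2 / 3) := by
  calc (1 : ℝ) / 2 = exp (-log 2) := by rw [exp_neg, exp_log two_pos, one_div]
    _ ≤ exp (-2 / 3) := exp_le_exp.mpr (by linarith [log_two_gt_d9])

theorem pValue_sensitivity_general (N a b : ℤ) (hN : 0 < N)
    (ha : 1 ≤ a) (hb : 1 ≤ b) :
    |exp (-chiSq ![![(a : ℝ), (a : ℝ)], ![(b : ℝ), (b : ℝ)],
          ![(N : ℝ) / 2 - a - b, (N : ℝ) / 2 - a - b]] / 2)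
        - exp (-chiSq ![![(a : ℝ) - 1, (a : ℝ)], ![(b : ℝ) + 1, (b : ℝ)],
          ![(N : ℝ) / 2 - a - b, (N : ℝ) / 2 - a - b]] / 2)|
       = 1 - exp (-(1 / 2) * (1 / (2 * (a : ℝ) - 1) + 1 / (2 * (b : ℝ) + 1)))
      ∧ 1 - exp (-(1 / 2) * (1 / (2 * (a : ℝ) - 1) + 1 / (2 * (b : ℝ) + 1)))
        ≤ 1 - exp (-2 / 3)
      ∧ 1 - exp (-2 / 3) ≤ exp (-2 / 3) := by
  have hN' : (N : ℝ) ≠ 0 := by positivity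
  have ha' : (1 : ℝ) ≤ a := by exact_mod_cast ha
  have hb' : (1 : ℝ) ≤ b := by exact_mod_cast hb
  have hD : chiSq ![![(a : ℝ), (a : ℝ)], ![(b : ℝ), (b : ℝ)],
      ![(N : ℝ) / 2 - a - b, (N : ℝ) / 2 - a - b]] = 0 := by
    rw [chiSq_eq_sum_of_colSum_eq] <;> simp [Fin.sum_univ_three, hN']
  have hD' : chiSq ![![(a : ℝ) - 1, (a : ℝ)], ![(b : ℝ) + 1, (b : ℝ)],
      ![(N : ℝ) / 2 - a - b, (N : ℝ) / 2 - a - b]]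
      = 1 / (2 * (a : ℝ) - 1) + 1 / (2 * (b : ℝ) + 1) := by
    rw [chiSq_eq_sum_of_colSum_eq] <;> simp [Fin.sum_univ_three, hN']
    ring_nf
  have hx0 : 0 ≤ 1 / (2 * (a : ℝ) - 1) + 1 / (2 * (b : ℝ) + 1) := by
    have : (0 : ℝ) < 2 * a - 1 := by linarith
    positivity
  have hx43 : 1 / (2 * (a : ℝ) - 1) + 1 / (2 * (b : ℝ) + 1) ≤ 4 / 3 := by
    have : 1 / (2 * (a : ℝ) - 1) ≤ 1 := by rw [div_le_one (by linarith)]; linarith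
    have : 1 / (2 * (b : ℝ) + 1) ≤ 1 / 3 := by gcongr; linarith
    linarith
  rw [hD, hD', neg_zero, zero_div, exp_zero]
  refine ⟨?_, ?_, by linarith [half_le_exp_neg_two_div_three]⟩
  · rw [abs_of_nonneg (by rw [sub_nonneg, exp_le_one_iff]; linarith)]; ring_nf
  · gcongr; linarith

/-- For the exactly independent table `D` with rows
`(a,a), (b,b), (N/2−a−b, N/2−a−b)` and its one-individual neighbor `D'` with
rows `(a−1,a), (b+1,b), (N/2−a−b, N/2−a−b)`, the difference of the p-values
`exp(−χ²/2)` equals `1 − exp(−(1/2)(1/(2a−1)+1/(2b+1)))`, which is at most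
`1 − exp(−2/3)`, which in turn is at most `exp(−2/3)`. -/
theorem pValue_sensitivity (N a b : ℤ) (hN : 0 < N) (hNeven : Even N)
    (ha : 1 ≤ a) (hb : 1 ≤ b) (hab : a + b < N / 2) :
    |exp (-chiSq ![![(a : ℝ), (a : ℝ)], ![(b : ℝ), (b : ℝ)],
          ![(N : ℝ) / 2 - a - b, (N : ℝ) / 2 - a - b]] / 2)
        - exp (-chiSq ![![(a : ℝ) - 1, (a : ℝ)], ![(b : ℝ) + 1, (b : ℝ)],
          ![(N : ℝ) / 2 - a - b, (N : ℝ) / 2 - a - b]] / 2)|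
       = 1 - exp (-(1 / 2) * (1 / (2 * (a : ℝ) - 1) + 1 / (2 * (b : ℝ) + 1)))
      ∧ 1 - exp (-(1 / 2) * (1 / (2 * (a : ℝ) - 1) + 1 / (2 * (b : ℝ) + 1)))
        ≤ 1 - exp (-2 / 3)
      ∧ 1 - exp (-2 / 3) ≤ exp (-2 / 3) :=
  pValue_sensitivity_general N a b hN ha hb
end

section
/- Let c ≥ 3 and N be real numbers with N(c−2) − 2c > 0 and Nc − 2N − c > 0. Consider the 3×2 table with rows (0, (N+c)/c), (N/c, 0), (N(c−2)/(2c), (N(c−2)−2c)/(2c)); it has both column sums equal to N/2 and positive row sums. Then its Pearson χ²-statistic equals N(2Nc − 4N − 4c + c²) / (c(Nc − 2N − c)). -/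
open Finset

/-! With equal column sums `s` the total is `2 * s`, so every expected count is half its row
sum and a row `(a, b)` contributes `(a - b)² / (a + b)`. In the moved table the rows contribute
`(N + c) / c`, `N / c` and `c / (N * c - 2 * N - c)`. -/

lemma sq_sub_mean_div_mean_add (a b : ℝ) :
    (a - (a + b) / 2) ^ 2 / ((a + b) / 2) + (b - (a + b) / 2) ^ 2 / ((a + b) / 2)
      = (a - b) ^ 2 / (a + b) := by
  by_cases hab : a + b = 0
  · simp [hab]
  · field_simp
    ring

lemma chiSq_of_colSum_eq {O : Fin 3 → Fin 2 → ℝ} {s : ℝ} (hs : s ≠ 0)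
    (hcol₀ : ∑ i, O i 0 = s) (hcol₁ : ∑ i, O i 1 = s) :
    chiSq O = ∑ i, (O i 0 - O i 1) ^ 2 / (O i 0 + O i 1) := by
  have hcol : ∀ j, ∑ i, O i j = s := Fin.forall_fin_two.2 ⟨hcol₀, hcol₁⟩
  have htotal : ∑ i, ∑ j, O i j = 2 * s := by
    rw [Finset.sum_comm, Fin.sum_univ_two, hcol₀, hcol₁, two_mul]
  have hexpected : ∀ i, (O i 0 + O i 1) * s / (2 * s) = (O i 0 + O i 1) / 2 := fun i => by
    field_simp
  unfold chiSq
  simp only [hcol, htotal]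
  simp only [Fin.sum_univ_two, hexpected, sq_sub_mean_div_mean_add]

theorem chiSq_after_move_general (c N : ℝ) (hc : 3 ≤ c)
    (h2 : 0 < N * c - 2 * N - c) :
    chiSq ![![0, (N + c) / c], ![N / c, 0],
        ![N * (c - 2) / (2 * c), (N * (c - 2) - 2 * c) / (2 * c)]]
      = N * (2 * N * c - 4 * N - 4 * c + c ^ 2) / (c * (N * c - 2 * N - c)) := by
  have hc₀ : 0 < c := by linarith
  have hN : 0 < N := by nlinarith
  rw [chiSq_of_colSum_eq (s := N / 2) (by positivity)
    (by simp [Fin.sum_univ_three]; field_simp; ring)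
    (by simp [Fin.sum_univ_three]; field_simp; ring)]
  have hdiff₂ : N * (c - 2) / (2 * c) - (N * (c - 2) - 2 * c) / (2 * c) = 1 := by
    field_simp; ring
  have hrow₂ : N * (c - 2) / (2 * c) + (N * (c - 2) - 2 * c) / (2 * c)
      = (N * c - 2 * N - c) / c := by
    field_simp; ring
  simp only [Fin.isValue, Matrix.cons_val', Matrix.cons_val_zero, Matrix.cons_val_fin_one,
    Matrix.cons_val_one, sq, Fin.sum_univ_three, zero_sub, mul_neg, neg_mul, neg_neg, zero_add,
    mul_self_div_self, sub_zero, add_zero, Matrix.cons_val, hdiff₂, mul_one, hrow₂, one_div,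
    inv_div]
  rw [← add_div, div_add_div _ _ hc₀.ne' h2.ne']
  congr 1
  ring

/-- For reals `c ≥ 3` and `N` with `N(c−2) − 2c > 0` and
`Nc − 2N − c > 0`, the 3×2 table with rows `(0, (N+c)/c)`, `(N/c, 0)`,
`(N(c−2)/(2c), (N(c−2)−2c)/(2c))` has χ²-statistic
`N(2Nc − 4N − 4c + c²) / (c(Nc − 2N − c))`. -/
theorem chiSq_after_move (c N : ℝ) (hc : 3 ≤ c)
    (h1 : 0 < N * (c - 2) - 2 * c) (h2 : 0 < N * c - 2 * N - c) :
    chiSq ![![0, (N + c) / c], ![N / c, 0],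
        ![N * (c - 2) / (2 * c), (N * (c - 2) - 2 * c) / (2 * c)]]
      = N * (2 * N * c - 4 * N - 4 * c + c ^ 2) / (c * (N * c - 2 * N - c)) :=
  chiSq_after_move_general c N hc h2
end

section
/- Let ε > 0, S > 0, d a positive integer, and let p_μ(t) = ∏_{i=1}^{d} (ε/(2S))·exp(−ε|t_i − μ_i|/S) denote the density at t ∈ ℝ^d of the random vector μ + b, where b has d independent coordinates each Laplace-distributed with mean 0 and scale S/ε. Then for any μ, μ' ∈ ℝ^d with ‖μ − μ'‖₁ ≤ S and every t ∈ ℝ^d, p_μ(t) ≤ exp(ε)·p_{μ'}(t). Consequently, if a function f on datasets has sensitivity S (i.e., ‖f(D) − f(D')‖₁ ≤ S for all datasets D, D' differing in one individual), releasing f(D) + b with b ~ Laplace(0, S/ε)^d satisfies ε-differential privacy. -/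
open Finset Real

/-! The Laplace density is log-Lipschitz in its location: by the triangle inequality
`|t - μ'| ≤ |t - μ| + |μ - μ'|`, moving the mean of one coordinate by `δ` changes its density by a
factor of at most `exp (δ / scale)`. Over independent coordinates these factors multiply, so the
total factor is `exp (‖μ - μ'‖₁ / scale)`, which is `exp ε` when `‖μ - μ'‖₁ ≤ S` and the scale
is `S / ε`. -/

lemma exp_neg_mul_abs_sub_le {c : ℝ} (hc : 0 ≤ c) (x y z : ℝ) :
    exp (-c * |x - y|) ≤ exp (c * |y - z|) * exp (-c * |x - z|) := by
  rw [← exp_add, exp_le_exp]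
  nlinarith [mul_le_mul_of_nonneg_left (abs_sub_le x y z) hc]

lemma prod_mul_exp_neg_mul_abs_sub_le {ι : Type*} (s : Finset ι) {a c : ℝ} (ha : 0 ≤ a)
    (hc : 0 ≤ c) (t μ μ' : ι → ℝ) :
    ∏ i ∈ s, a * exp (-c * |t i - μ i|)
      ≤ exp (c * ∑ i ∈ s, |μ i - μ' i|) * ∏ i ∈ s, a * exp (-c * |t i - μ' i|) := by
  rw [mul_sum, exp_sum, ← prod_mul_distrib]
  refine prod_le_prod (fun i _ => by positivity) fun i _ => ?_
  calc a * exp (-c * |t i - μ i|)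
      ≤ a * (exp (c * |μ i - μ' i|) * exp (-c * |t i - μ' i|)) :=
        mul_le_mul_of_nonneg_left (exp_neg_mul_abs_sub_le hc _ _ _) ha
    _ = exp (c * |μ i - μ' i|) * (a * exp (-c * |t i - μ' i|)) := by ring

theorem laplace_mechanism_dp_general (ε S : ℝ) (hε : 0 < ε) (hS : 0 < S)
    (d : ℕ) (μ μ' : Fin d → ℝ)
    (hsens : ∑ i : Fin d, |μ i - μ' i| ≤ S) (t : Fin d → ℝ) :
    ∏ i : Fin d, (ε / (2 * S)) * exp (-ε * |t i - μ i| / S)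
      ≤ exp ε * ∏ i : Fin d, (ε / (2 * S)) * exp (-ε * |t i - μ' i| / S) := by
  simp_rw [show ∀ x, -ε * x / S = -(ε / S) * x from fun x => by ring]
  have hshift : ε / S * ∑ i, |μ i - μ' i| ≤ ε := by
    rw [div_mul_eq_mul_div, div_le_iff₀ hS]
    exact mul_le_mul_of_nonneg_left hsens hε.le
  calc ∏ i, ε / (2 * S) * exp (-(ε / S) * |t i - μ i|)
      ≤ exp (ε / S * ∑ i, |μ i - μ' i|) * ∏ i, ε / (2 * S) * exp (-(ε / S) * |t i - μ' i|) :=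
        prod_mul_exp_neg_mul_abs_sub_le _ (by positivity) (by positivity) t μ μ'
    _ ≤ exp ε * ∏ i, ε / (2 * S) * exp (-(ε / S) * |t i - μ' i|) := by gcongr

/-- The Laplace mechanism is ε-differentially private:
if `p_μ(t) = ∏ i, (ε/(2S))·exp(−ε|tᵢ − μᵢ|/S)` is the density of `μ + b`
where the coordinates of `b` are i.i.d. `Laplace(0, S/ε)`, then for any
`μ, μ'` with `‖μ − μ'‖₁ ≤ S` and every `t`, `p_μ(t) ≤ exp(ε)·p_{μ'}(t)`. -/
theorem laplace_mechanism_dp (ε S : ℝ) (hε : 0 < ε) (hS : 0 < S)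
    (d : ℕ) (hd : 0 < d) (μ μ' : Fin d → ℝ)
    (hsens : ∑ i : Fin d, |μ i - μ' i| ≤ S) (t : Fin d → ℝ) :
    ∏ i : Fin d, (ε / (2 * S)) * exp (-ε * |t i - μ i| / S)
      ≤ exp ε * ∏ i : Fin d, (ε / (2 * S)) * exp (-ε * |t i - μ' i| / S) :=
  laplace_mechanism_dp_general ε S hε hS d μ μ' hsens t
end
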